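/- For all m, n ≥ 0, the Gaussian binomial coefficient [m+n choose m]_q = [m+n]!/([m]![n]!) is a polynomial in q of degree mn whose coefficient sequence is symmetric (palindromic) and unimodal. -/

import Mathlib

open Polynomial

namespace SepPerm

/-- The length (number of inversions) of a permutation of `Fin n`. -/
def invCount {n : ℕ} (π : Equiv.Perm (Fin n)) : ℕ :=
  (Finset.univ.filter fun p : Fin n × Fin n => p.1 < p.2 ∧ π p.2 < π p.1).card

/-- The (right) weak Bruhat order: `u ≤ v` iff `ℓ(u) + ℓ(u⁻¹v) = ℓ(v)`. -/
def wle {n : ℕ} (u v : Equiv.Perm (Fin n)) : Prop :=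
  invCount u + invCount (u⁻¹ * v) = invCount v

open scoped Classical in
/-- `F(Λ_π, q) = ∑_{u ≤ π} q^{ℓ(u)}`, rank generating function of `[id, π]`. -/
noncomputable def FLam {n : ℕ} (π : Equiv.Perm (Fin n)) : Polynomial ℤ :=
  ∑ u ∈ Finset.univ.filter (fun u => wle u π), X ^ invCount u

open scoped Classical in
/-- `F(V_π, q) = ∑_{v ≥ π} q^{ℓ(v) - ℓ(π)}`, rank generating function of `[π, w₀]`. -/
noncomputable def FV {n : ℕ} (π : Equiv.Perm (Fin n)) : Polynomial ℤ :=
  ∑ v ∈ Finset.univ.filter (fun v => wle π v), X ^ (invCount v - invCount π)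

/-- A permutation is separable iff it avoids the patterns 3142 and 2413. -/
def IsSeparable {n : ℕ} (π : Equiv.Perm (Fin n)) : Prop :=
  (¬ ∃ i j k h : Fin n, i < j ∧ j < k ∧ k < h ∧
      π j < π h ∧ π h < π i ∧ π i < π k) ∧
  (¬ ∃ i j k h : Fin n, i < j ∧ j < k ∧ k < h ∧
      π k < π i ∧ π i < π h ∧ π h < π j)

/-- The longest element `w₀ = n, n-1, …, 1`. -/
def w0 (n : ℕ) : Equiv.Perm (Fin n) := Fin.revPerm

/-- The complement `π^c`, with `π^c(i) = n + 1 - π(i)` (one-indexed). -/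
def compl {n : ℕ} (π : Equiv.Perm (Fin n)) : Equiv.Perm (Fin n) := w0 n * π

/-- `[k] = 1 + q + ⋯ + q^{k-1}`. -/
noncomputable def qnum (k : ℕ) : Polynomial ℤ := ∑ i ∈ Finset.range k, X ^ i

/-- `[N]! = [1][2]⋯[N]`. -/
noncomputable def qfact (N : ℕ) : Polynomial ℤ := ∏ k ∈ Finset.range N, qnum (k + 1)

/-- The inversion poset `P_π` on the letters: `x ≤_P y` iff `x ≤ y` and `π⁻¹x ≤ π⁻¹y`. -/
def invLe {n : ℕ} (π : Equiv.Perm (Fin n)) (x y : Fin n) : Prop :=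
  x ≤ y ∧ π⁻¹ x ≤ π⁻¹ y

/-- `σ` is a linear extension of the order `r`: whenever `i <_r j`, `i` precedes `j`
in the one-line notation of `σ` (i.e. the position `σ⁻¹ i` comes before `σ⁻¹ j`). -/
def IsLinExt {N : ℕ} (r : Fin N → Fin N → Prop) (σ : Equiv.Perm (Fin N)) : Prop :=
  ∀ i j, r i j → i ≠ j → σ.symm i < σ.symm j

open scoped Classical in
/-- `F(𝓛(P), q) = ∑_{σ ∈ 𝓛(P)} q^{ℓ(σ)}`, generating function of linear extensions
by number of inversions. -/
noncomputable def FLin {N : ℕ} (r : Fin N → Fin N → Prop) : Polynomial ℤ :=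
  ∑ σ ∈ Finset.univ.filter (fun σ => IsLinExt r σ), X ^ invCount σ

/-!
The coefficient of `q ^ s` in `[m+n choose m]_q` counts the monomials of degree `m` in
`X 0, …, X n` of weight `∑ j * d j = s`, both being the `t ^ m`-coefficient of
`∏_{j ≤ n} (1 - q ^ j t)⁻¹`. Derivations of `ℚ[X 0, X 1, …]` make the span of these monomials
`Sym^m` of the `(n+1)`-dimensional irreducible `sl₂`-module, in which the monomials of weight `s`
span the `h`-eigenspace for `m * n - 2 * s`. A vector `v` killed by `e` with `h v = μ v` starts a
string with `e (f ^ (k+1) v) = (k+1)(μ-k) • f ^ k v`; as `f` is nilpotent there, `μ` is a natural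
number. So `e` is injective on the eigenspaces of negative eigenvalue, which is the decreasing half
of unimodality. Degree and symmetry follow from `C * [m]! * [n]! = [m+n]!` alone, each `[k]` being
monic and palindromic.
-/

end SepPerm

open Finset

open LieModule in
theorem IsSl2Triple.HasPrimitiveVectorWith.exists_nat_of_pow_toEnd_f_eq_zero
    {R L M : Type*} [CommRing R] [LieRing L] [LieAlgebra R L] [AddCommGroup M] [Module R M]
    [LieRingModule L M] [LieModule R L M] [CharZero R] [IsDomain R] [Module.IsTorsionFree R M]
    {h e f : L} {t : IsSl2Triple h e f} {m : M} {μ : R} (P : t.HasPrimitiveVectorWith m μ)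
    {k : ℕ} (hk : (toEnd R L M f ^ k) m = 0) : ∃ n : ℕ, μ = n := by
  obtain ⟨n, hn₁, hn₂⟩ := Nat.exists_not_and_succ_of_not_zero_of_exists
    (p := fun i => (toEnd R L M f ^ i) m = 0) P.ne_zero ⟨k, hk⟩
  refine ⟨n, ?_⟩
  have := P.lie_e_pow_succ_toEnd_f n
  rw [hn₂, lie_zero, eq_comm, smul_eq_zero_iff_left hn₁, mul_eq_zero, sub_eq_zero] at this
  exact this.resolve_left <| Nat.cast_add_one_ne_zero n

theorem MvPolynomial.mkDerivation_smul_X_monomial {σ R : Type*} [CommRing R] (c : σ → R)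
    (τ : σ → σ) (d : σ →₀ ℕ) :
    mkDerivation R (fun j => c j • MvPolynomial.X (τ j)) (MvPolynomial.monomial d 1) =
      ∑ j ∈ d.support, ((d j : R) * c j) •
        (MvPolynomial.monomial (d - .single j 1 + .single (τ j) 1) 1 : MvPolynomial σ R) := by
  rw [mkDerivation_monomial, one_smul, Finsupp.sum]
  refine sum_congr rfl fun j _ => ?_
  rw [smul_eq_mul, MvPolynomial.X, mul_smul_comm, monomial_mul, MvPolynomial.smul_monomial,
    MvPolynomial.smul_monomial]
  simp [mul_comm]

theorem MvPolynomial.mkDerivation_smul_X_mem_restrictSupport {σ R : Type*} [CommRing R]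
    {c : σ → R} {τ : σ → σ} {A B : Set (σ →₀ ℕ)}
    (hAB : ∀ d ∈ A, ∀ j, d j ≠ 0 → c j ≠ 0 → d - .single j 1 + .single (τ j) 1 ∈ B)
    {p : MvPolynomial σ R} (hp : p ∈ restrictSupport R A) :
    mkDerivation R (fun j => c j • MvPolynomial.X (τ j)) p ∈ restrictSupport R B := by
  rw [restrictSupport_eq_span] at hp
  induction hp using Submodule.span_induction with
  | mem x hx =>
    obtain ⟨d, hd, rfl⟩ := hx
    rw [mkDerivation_smul_X_monomial]
    refine Submodule.sum_mem _ fun j hj => ?_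
    by_cases hc : c j = 0
    · simp [hc]
    · exact Submodule.smul_mem _ _ ((monomial_mem_restrictSupport R).2
        (.inl (hAB d hd j (Finsupp.mem_support_iff.1 hj) hc)))
  | zero => simp
  | add x y _ _ hx hy => rw [map_add]; exact add_mem hx hy
  | smul a x _ hx => rw [Derivation.map_smul]; exact Submodule.smul_mem _ a hx

theorem exists_unimodal_of_symm_of_antitone {α : Type*} [Preorder α] {c : ℕ → α} {d : ℕ}
    (hsymm : ∀ k ≤ d, c k = c (d - k)) (hanti : ∀ k, d < 2 * (k + 1) → c (k + 1) ≤ c k) :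
    ∃ j, (∀ k, k + 1 ≤ j → c k ≤ c (k + 1)) ∧ (∀ k, j ≤ k → k < d → c (k + 1) ≤ c k) := by
  refine ⟨d / 2, fun k hk => ?_, fun k hk _ => hanti k (by omega)⟩
  have h := hanti (d - (k + 1)) (by omega)
  rwa [show d - (k + 1) + 1 = d - k by omega, ← hsymm k (by omega),
    ← hsymm (k + 1) (by omega)] at h

namespace SepPerm

theorem qnum_add (m n : ℕ) : qnum (m + n) = qnum n + X ^ n * qnum m := by
  rw [qnum, qnum, qnum, add_comm, sum_range_add, mul_sum]
  simp only [pow_add]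

theorem qfact_succ (n : ℕ) : qfact (n + 1) = qfact n * qnum (n + 1) :=
  prod_range_succ _ _

theorem coeff_qnum (k i : ℕ) : (qnum k).coeff i = if i < k then 1 else 0 := by
  simp [qnum, coeff_X_pow]

theorem monic_qnum_succ (k : ℕ) : (qnum (k + 1)).Monic :=
  monic_geom_sum_X k.succ_ne_zero

theorem natDegree_qnum_succ (k : ℕ) : (qnum (k + 1)).natDegree = k :=
  natDegree_eq_of_le_of_coeff_ne_zero
    (natDegree_le_iff_coeff_eq_zero.2 fun i hi => by simp [coeff_qnum]; omega)
    (by simp [coeff_qnum])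

theorem reverse_qnum_succ (k : ℕ) : (qnum (k + 1)).reverse = qnum (k + 1) := by
  ext i
  rw [coeff_reverse, natDegree_qnum_succ, coeff_qnum, coeff_qnum]
  by_cases hi : i ≤ k
  · rw [revAt_le hi]; split_ifs <;> omega
  · rw [revAt_eq_self_of_lt (by omega)]

theorem monic_qfact (N : ℕ) : (qfact N).Monic :=
  monic_prod_of_monic _ _ fun k _ => monic_qnum_succ k

theorem natDegree_qfact (N : ℕ) : (qfact N).natDegree = ∑ k ∈ range N, k := by
  rw [qfact, natDegree_prod_of_monic _ _ fun k _ => monic_qnum_succ k]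
  simp only [natDegree_qnum_succ]

theorem reverse_qfact (N : ℕ) : (qfact N).reverse = qfact N := by
  induction N with
  | zero => simpa [qfact] using reverse_C (1 : ℤ)
  | succ N ih => rw [qfact_succ, reverse_mul_of_domain, ih, reverse_qnum_succ]

section MulQfact

variable {m n : ℕ} {C : ℤ[X]}

theorem natDegree_eq_of_mul_qfact (h : C * (qfact m * qfact n) = qfact (m + n)) :
    C.natDegree = m * n := by
  have hC : C ≠ 0 := by
    rintro rfl
    exact (monic_qfact (m + n)).ne_zero (by rw [← h, zero_mul])
  have hdeg := congrArg natDegree h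
  rw [natDegree_mul hC ((monic_qfact m).mul (monic_qfact n)).ne_zero,
    natDegree_mul (monic_qfact m).ne_zero (monic_qfact n).ne_zero, natDegree_qfact,
    natDegree_qfact, natDegree_qfact, sum_range_add, sum_add_distrib, sum_const, card_range,
    smul_eq_mul] at hdeg
  linarith

theorem reverse_eq_of_mul_qfact (h : C * (qfact m * qfact n) = qfact (m + n)) : C.reverse = C := by
  have hP := ((monic_qfact m).mul (monic_qfact n)).ne_zero
  have hrev := congrArg reverse h
  rw [reverse_mul_of_domain, reverse_mul_of_domain, reverse_qfact, reverse_qfact, reverse_qfact,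
    ← h] at hrev
  exact mul_right_cancel₀ hP hrev

theorem coeff_symm_of_mul_qfact (h : C * (qfact m * qfact n) = qfact (m + n)) {k : ℕ}
    (hk : k ≤ m * n) : C.coeff k = C.coeff (m * n - k) := by
  conv_lhs => rw [← reverse_eq_of_mul_qfact h]
  rw [coeff_reverse, natDegree_eq_of_mul_qfact h, revAt_le hk]

end MulQfact

/-- `∏_{j ≤ n} (1 - q ^ j t)⁻¹`, as `rescale (q ^ j) (mk 1) = (1 - q ^ j t)⁻¹`. -/
noncomputable def gaussianBinomialSeries (n : ℕ) : PowerSeries ℤ[X] :=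
  ∏ j ∈ range (n + 1), PowerSeries.rescale (X ^ j) (PowerSeries.mk 1)

theorem gaussianBinomialSeries_succ (n : ℕ) :
    gaussianBinomialSeries (n + 1) =
      gaussianBinomialSeries n +
        PowerSeries.C (X ^ (n + 1)) * PowerSeries.X * gaussianBinomialSeries (n + 1) := by
  have hgeom := congr(PowerSeries.rescale ((X : ℤ[X]) ^ (n + 1))
    $(PowerSeries.mk_one_mul_one_sub_eq_one ℤ[X]))
  rw [map_mul, map_sub, map_one, PowerSeries.rescale_X] at hgeom
  rw [gaussianBinomialSeries, prod_range_succ, ← gaussianBinomialSeries]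
  linear_combination (gaussianBinomialSeries n) * hgeom

noncomputable def gaussianBinomial (m n : ℕ) : ℤ[X] :=
  PowerSeries.coeff m (gaussianBinomialSeries n)

theorem gaussianBinomial_zero_left (n : ℕ) : gaussianBinomial 0 n = 1 := by
  simp [gaussianBinomial, gaussianBinomialSeries, PowerSeries.coeff_zero_eq_constantCoeff,
    map_prod, ← PowerSeries.coeff_zero_eq_constantCoeff_apply, PowerSeries.coeff_rescale]

theorem gaussianBinomial_zero_right (m : ℕ) : gaussianBinomial m 0 = 1 := by
  simp [gaussianBinomial, gaussianBinomialSeries]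

theorem gaussianBinomial_succ_succ (m n : ℕ) :
    gaussianBinomial (m + 1) (n + 1) =
      gaussianBinomial (m + 1) n + X ^ (n + 1) * gaussianBinomial m (n + 1) := by
  rw [gaussianBinomial, gaussianBinomialSeries_succ, map_add, mul_assoc, PowerSeries.coeff_C_mul,
    PowerSeries.coeff_succ_X_mul]
  rfl

theorem gaussianBinomial_mul_qfact (m n : ℕ) :
    gaussianBinomial m n * (qfact m * qfact n) = qfact (m + n) := by
  induction m generalizing n with
  | zero => simp [gaussianBinomial_zero_left, qfact]
  | succ m ihm =>
    induction n with
    | zero => simp [gaussianBinomial_zero_right, qfact]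
    | succ n ihn =>
      have hm := ihm (n + 1)
      have hq := qnum_add (m + 1) (n + 1)
      rw [show m + (n + 1) = m + 1 + n by ring] at hm
      rw [show m + 1 + (n + 1) = m + 1 + n + 1 by ring] at hq ⊢
      rw [gaussianBinomial_succ_succ, qfact_succ (m + 1 + n)]
      linear_combination qnum (n + 1) * ihn + X ^ (n + 1) * qnum (m + 1) * hm -
        qfact (m + 1 + n) * hq + gaussianBinomial (m + 1) n * qfact (m + 1) * qfact_succ n +
        X ^ (n + 1) * gaussianBinomial m (n + 1) * qfact (n + 1) * qfact_succ m

theorem gaussianBinomial_eq_sum (m n : ℕ) :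
    gaussianBinomial m n =
      ∑ d ∈ (range (n + 1)).finsuppAntidiag m, X ^ Finsupp.weight (fun j => j) d := by
  rw [gaussianBinomial, gaussianBinomialSeries, PowerSeries.coeff_prod]
  refine sum_congr rfl fun d hd => ?_
  simp only [PowerSeries.coeff_rescale, PowerSeries.coeff_mk, Pi.one_apply, mul_one, ← pow_mul,
    prod_pow_eq_pow_sum]
  rw [Finsupp.weight_apply, Finsupp.sum_of_support_subset _ (mem_finsuppAntidiag.1 hd).2]
  · simp [mul_comm]
  · simp

noncomputable def weightMonomials (m n s : ℕ) : Finset (ℕ →₀ ℕ) :=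
  {d ∈ (range (n + 1)).finsuppAntidiag m | Finsupp.weight (fun j => j) d = s}

theorem coeff_gaussianBinomial (m n k : ℕ) :
    (gaussianBinomial m n).coeff k = #(weightMonomials m n k) := by
  simp [gaussianBinomial_eq_sum, coeff_X_pow, weightMonomials, eq_comm]

section WeightMonomials

variable {m n s : ℕ} {d : ℕ →₀ ℕ}

theorem le_of_mem_weightMonomials (hd : d ∈ weightMonomials m n s) {j : ℕ} (hj : d j ≠ 0) :
    j ≤ n := by
  have := (mem_finsuppAntidiag.1 (mem_filter.1 hd).1).2 (Finsupp.mem_support_iff.2 hj)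
  exact Nat.lt_succ_iff.1 (mem_range.1 this)

theorem sub_single_add_single_mem_weightMonomials {t j k : ℕ} (hd : d ∈ weightMonomials m n s)
    (hj : d j ≠ 0) (hk : k ≤ n) (hst : s + k = t + j) :
    d - .single j 1 + .single k 1 ∈ weightMonomials m n t := by
  obtain ⟨d, rfl⟩ : ∃ d₀, d = d₀ + .single j 1 :=
    ⟨_, (tsub_add_cancel_of_le (Finsupp.single_le_iff.2 (Nat.one_le_iff_ne_zero.2 hj))).symm⟩
  have hjn : j < n + 1 := Nat.lt_succ_of_le (le_of_mem_weightMonomials hd hj)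
  simp only [weightMonomials, mem_filter, mem_finsuppAntidiag, map_add, Finsupp.weight_single,
    add_tsub_cancel_right] at hd ⊢
  obtain ⟨⟨hsum, hsupp⟩, hwt⟩ := hd
  refine ⟨⟨?_, ?_⟩, by simp only [smul_eq_mul] at hwt ⊢; omega⟩
  · simp only [Finsupp.coe_add, Pi.add_apply, sum_add_distrib, Finsupp.single_apply,
      sum_ite_eq, mem_range, if_pos hjn] at hsum ⊢
    rwa [if_pos (by omega)]
  · refine Finsupp.support_add.trans (union_subset ?_ ?_)
    · exact (Finsupp.support_mono le_self_add).trans hsupp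
    · exact Finsupp.support_single_subset.trans (by simpa using hk)

theorem weightMonomials_eq_empty (h : m * n < s) : weightMonomials m n s = ∅ := by
  refine eq_empty_of_forall_notMem fun d hd => h.not_ge ?_
  have hle : ∀ j ∈ d.support, j ≤ n := fun j hj =>
    le_of_mem_weightMonomials hd (Finsupp.mem_support_iff.1 hj)
  simp only [weightMonomials, mem_filter, mem_finsuppAntidiag'] at hd
  obtain ⟨⟨hdeg, -⟩, rfl⟩ := hd
  rw [← hdeg, Finsupp.weight_apply, Finsupp.sum, Finsupp.sum, sum_mul]
  exact sum_le_sum fun j hj => Nat.mul_le_mul_left (d j) (hle j hj)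

end WeightMonomials

/-- `e`, `f`, `h` act on `X 0, …, X n` as on the standard basis of the `(n+1)`-dimensional
irreducible representation of `sl₂`, with `X j` of `h`-eigenvalue `n - 2 * j`. The relations hold on
every `X j`; the coefficients `j` and `n - j` vanish where `X (j - 1)` and `X (j + 1)` would leave
`X 0, …, X n`. -/
noncomputable def sl2E : Derivation ℚ (MvPolynomial ℕ ℚ) (MvPolynomial ℕ ℚ) :=
  MvPolynomial.mkDerivation ℚ fun j => (j : ℚ) • MvPolynomial.X (j - 1)

noncomputable def sl2F (n : ℕ) : Derivation ℚ (MvPolynomial ℕ ℚ) (MvPolynomial ℕ ℚ) :=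
  MvPolynomial.mkDerivation ℚ fun j => ((n : ℚ) - j) • MvPolynomial.X (j + 1)

noncomputable def sl2H (n : ℕ) : Derivation ℚ (MvPolynomial ℕ ℚ) (MvPolynomial ℕ ℚ) :=
  MvPolynomial.mkDerivation ℚ fun j => ((n : ℚ) - 2 * j) • MvPolynomial.X j

theorem isSl2Triple (n : ℕ) : IsSl2Triple (sl2H n) sl2E (sl2F n) where
  h_ne_zero h := by
    have := congr(MvPolynomial.coeff (.single (n + 1) 1) ($h (MvPolynomial.X (n + 1))))
    simp [sl2H, MvPolynomial.coeff_X] at this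
    linarith
  lie_e_f := MvPolynomial.derivation_ext fun j => by
    rcases j with _ | j
    · simp [sl2E, sl2F, sl2H, Derivation.commutator_apply]
    · simp [sl2E, sl2F, sl2H, Derivation.commutator_apply]
      module
  lie_h_e_nsmul := MvPolynomial.derivation_ext fun j => by
    rcases j with _ | j
    · simp [sl2E, sl2H, Derivation.commutator_apply]
    · simp [sl2E, sl2H, Derivation.commutator_apply, two_mul]
      module
  lie_h_f_nsmul := MvPolynomial.derivation_ext fun j => by
    simp [sl2F, sl2H, Derivation.commutator_apply, two_mul]
    module

noncomputable def weightSpace (m n s : ℕ) : Submodule ℚ (MvPolynomial ℕ ℚ) :=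
  MvPolynomial.restrictSupport ℚ (weightMonomials m n s)

section WeightSpace

variable {m n s : ℕ} {p : MvPolynomial ℕ ℚ}

theorem sl2E_mem_weightSpace (hp : p ∈ weightSpace m n (s + 1)) : sl2E p ∈ weightSpace m n s :=
  MvPolynomial.mkDerivation_smul_X_mem_restrictSupport (fun _ hd j hj hc =>
    sub_single_add_single_mem_weightMonomials hd hj
      (by have := le_of_mem_weightMonomials hd hj; omega) (by simp at hc; omega)) hp

theorem sl2F_mem_weightSpace (hp : p ∈ weightSpace m n s) : sl2F n p ∈ weightSpace m n (s + 1) :=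
  MvPolynomial.mkDerivation_smul_X_mem_restrictSupport (fun _ hd j hj hc =>
    sub_single_add_single_mem_weightMonomials hd hj
      (by have := le_of_mem_weightMonomials hd hj; simp [sub_eq_zero] at hc; omega)
      (by omega)) hp

theorem sl2F_pow_mem_weightSpace (hp : p ∈ weightSpace m n s) (k : ℕ) :
    (LieModule.toEnd ℚ _ _ (sl2F n) ^ k) p ∈ weightSpace m n (s + k) := by
  induction k with
  | zero => simpa using hp
  | succ k ih =>
    rw [pow_succ', Module.End.mul_apply, LieModule.toEnd_apply_apply, Derivation.bracket_eq_fun,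
      ← add_assoc]
    exact sl2F_mem_weightSpace ih

theorem sl2H_monomial {d : ℕ →₀ ℕ} (hd : d ∈ weightMonomials m n s) :
    sl2H n (.monomial d 1) = ((m : ℚ) * n - 2 * s) • MvPolynomial.monomial d 1 := by
  simp only [weightMonomials, mem_filter, mem_finsuppAntidiag'] at hd
  obtain ⟨⟨hdeg, -⟩, hwt⟩ := hd
  have hsum : ∑ j ∈ d.support, ((d j : ℚ) * ((n : ℚ) - 2 * j)) = (m : ℚ) * n - 2 * s := by
    rw [← hdeg, ← hwt, Finsupp.weight_apply, Finsupp.sum, Finsupp.sum]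
    push_cast
    rw [sum_mul, mul_sum, ← sum_sub_distrib]
    exact sum_congr rfl fun j _ => by simp only [smul_eq_mul, Nat.cast_mul]; ring
  refine (MvPolynomial.mkDerivation_smul_X_monomial _ id d).trans ?_
  rw [← hsum, sum_smul]
  refine sum_congr rfl fun j hj => ?_
  rw [id, tsub_add_cancel_of_le (Finsupp.single_le_iff.2
    (Nat.one_le_iff_ne_zero.2 (Finsupp.mem_support_iff.1 hj)))]

theorem sl2H_apply_of_mem_weightSpace (hp : p ∈ weightSpace m n s) :
    sl2H n p = ((m : ℚ) * n - 2 * s) • p := by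
  rw [weightSpace, MvPolynomial.restrictSupport_eq_span] at hp
  induction hp using Submodule.span_induction with
  | mem x hx => obtain ⟨d, hd, rfl⟩ := hx; exact sl2H_monomial hd
  | zero => simp
  | add x y _ _ hx hy => rw [map_add, hx, hy, smul_add]
  | smul a x _ hx => rw [Derivation.map_smul, hx, smul_comm]

theorem eq_zero_of_sl2E_eq_zero (hs : m * n < 2 * (s + 1)) (hp : p ∈ weightSpace m n (s + 1))
    (he : sl2E p = 0) : p = 0 := by
  by_contra hp0
  have P : (isSl2Triple n).HasPrimitiveVectorWith p ((m : ℚ) * n - 2 * (s + 1 : ℕ)) :=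
    ⟨hp0, sl2H_apply_of_mem_weightSpace hp, he⟩
  have hpow := sl2F_pow_mem_weightSpace hp (m * n)
  rw [weightSpace, weightMonomials_eq_empty (by omega)] at hpow
  obtain ⟨k, hk⟩ := P.exists_nat_of_pow_toEnd_f_eq_zero
    (by simpa [MvPolynomial.mem_restrictSupport_iff] using hpow)
  have : (m * n : ℚ) < 2 * (s + 1 : ℕ) := by exact_mod_cast hs
  have : (0 : ℚ) ≤ k := k.cast_nonneg
  linarith

theorem finrank_weightSpace :
    Module.finrank ℚ (weightSpace m n s) = #(weightMonomials m n s) := by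
  rw [weightSpace, Module.finrank_eq_card_basis (MvPolynomial.basisRestrictSupport ℚ _)]
  simp

theorem card_weightMonomials_succ_le (hs : m * n < 2 * (s + 1)) :
    #(weightMonomials m n (s + 1)) ≤ #(weightMonomials m n s) := by
  have : FiniteDimensional ℚ (weightSpace m n s) :=
    .of_basis (MvPolynomial.basisRestrictSupport ℚ _)
  rw [← finrank_weightSpace, ← finrank_weightSpace]
  refine LinearMap.finrank_le_finrank_of_injective
    (f := sl2E.toLinearMap.restrict fun _ hp => sl2E_mem_weightSpace hp) ?_
  rw [← LinearMap.ker_eq_bot, LinearMap.ker_eq_bot']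
  exact fun p hp => Subtype.ext (eq_zero_of_sl2E_eq_zero hs p.2 congr($hp.1))

end WeightSpace

/-- The Gaussian binomial coefficient `[m+n choose m]_q`
(the polynomial `C` with `C · [m]! [n]! = [m+n]!`) is a polynomial in `q` of degree
`mn` whose coefficient sequence is symmetric and unimodal. -/
theorem gaussian_binomial_symmetric_unimodal (m n : ℕ) :
    ∃ C : Polynomial ℤ,
      C * (qfact m * qfact n) = qfact (m + n) ∧
      C.natDegree = m * n ∧
      (∀ k ≤ m * n, C.coeff k = C.coeff (m * n - k)) ∧
      ∃ j : ℕ,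
        (∀ k : ℕ, k + 1 ≤ j → C.coeff k ≤ C.coeff (k + 1)) ∧
        (∀ k : ℕ, j ≤ k → k < m * n → C.coeff (k + 1) ≤ C.coeff k) := by
  have h := gaussianBinomial_mul_qfact m n
  have hsymm : ∀ k ≤ m * n, _ := fun k hk => coeff_symm_of_mul_qfact h hk
  refine ⟨gaussianBinomial m n, h, natDegree_eq_of_mul_qfact h, hsymm,
    exists_unimodal_of_symm_of_antitone hsymm fun k hk => ?_⟩
  rw [coeff_gaussianBinomial, coeff_gaussianBinomial]
  exact_mod_cast card_weightMonomials_succ_le hk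

end SepPerm
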